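/- Let X and Y be topological spaces and M a divisible abelian group. If X is Y-unitary, then every homotopy invariant f : C(X,Y) → M is straight. -/

import Mathlib

open FreeAbelianGroup in
/-- `L(X,Y)`: the subgroup of `Hom(⟨X⟩,⟨Y⟩)` generated by the homomorphisms `u` such that
each `u⟨x⟩` is `0` or some basis element `⟨y⟩`. -/
def Lgroup (X Y : Type*) : AddSubgroup (FreeAbelianGroup X →+ FreeAbelianGroup Y) :=
  AddSubgroup.closure {u | ∀ x : X, u (of x) = 0 ∨ ∃ y : Y, u (of x) = of y}

/-- The homomorphism `⟨a⟩ : ⟨X⟩ → ⟨Y⟩` induced by a map `a : X → Y`. -/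
def inducedHom {X Y : Type*} (a : X → Y) : FreeAbelianGroup X →+ FreeAbelianGroup Y :=
  FreeAbelianGroup.lift (fun x => FreeAbelianGroup.of (a x))

lemma inducedHom_mem {X Y : Type*} (a : X → Y) : inducedHom a ∈ Lgroup X Y :=
  AddSubgroup.subset_closure (fun x => Or.inr ⟨a x, by simp [inducedHom, FreeAbelianGroup.lift_apply_of]⟩)

/-- `⟨a⟩` as an element of `L(X,Y)`. -/
def inducedL {X Y : Type*} (a : X → Y) : Lgroup X Y := ⟨inducedHom a, inducedHom_mem a⟩

/-- A function on continuous maps is a homotopy invariant if it only depends on homotopy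
classes. -/
def IsHomotopyInvariant {X Y : Type*} [TopologicalSpace X] [TopologicalSpace Y] {M : Type*}
    [AddCommGroup M] (f : C(X, Y) → M) : Prop :=
  ∀ a b : C(X, Y), a.Homotopic b → f a = f b

/-- A homotopy invariant `f` is straight if it factors as `f a = F ⟨a⟩` for an additive
homomorphism `F : L(X,Y) → M`. -/
def IsStraight {X Y : Type*} [TopologicalSpace X] [TopologicalSpace Y] {M : Type*}
    [AddCommGroup M] (f : C(X, Y) → M) : Prop :=
  ∃ F : Lgroup X Y →+ M, ∀ a : C(X, Y), f a = F (inducedL a)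

/-- A set `E ⊆ X` is `Y`-representative if any two continuous maps `X → Y` that agree on `E`
are homotopic. -/
def IsRepresentative (Y : Type*) [TopologicalSpace Y] {X : Type*} [TopologicalSpace X]
    (E : Set X) : Prop :=
  ∀ a b : C(X, Y), Set.EqOn ⇑a ⇑b E → a.Homotopic b

/-- `X` is `Y`-unitary if every finite cover of `X` contains a `Y`-representative set. -/
def IsUnitary (X Y : Type*) [TopologicalSpace X] [TopologicalSpace Y] : Prop :=
  ∀ S : Finset (Set X), (∀ x : X, ∃ E ∈ S, x ∈ E) → ∃ E ∈ S, IsRepresentative Y E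

/-!
A relation `∑ nᵢ ⟨aᵢ⟩ = 0` in `L(X,Y)` says that at every point `x` the coefficients of the maps
taking a common value at `x` sum to zero. Cover `X` by the finitely many sets on which the pattern
of coincidences `aᵢ x = aⱼ x` is constant; by unitarity one of them is representative, so maps
agreeing at a single point `x₀` of it are homotopic, `f` is constant on the fibres of evaluation
at `x₀`, and `∑ nᵢ f aᵢ = 0`. Hence `⟨a⟩ ↦ f a` is well defined on the subgroup generated by the
`⟨a⟩`, and it extends to `L(X,Y)` because a divisible group is injective.
-/

theorem LinearMap.exists_comp_eq_of_ker_le {R A B Q : Type*} [Ring R] [AddCommGroup A]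
    [Module R A] [AddCommGroup B] [Module R B] [AddCommGroup Q] [Module R Q]
    (hQ : Module.Baer R Q) (φ : A →ₗ[R] B) (ψ : A →ₗ[R] Q) (h : ker φ ≤ ker ψ) :
    ∃ F : B →ₗ[R] Q, F ∘ₗ φ = ψ := by
  obtain ⟨F, hF⟩ := hQ.extension_property ((ker φ).liftQ φ le_rfl)
    (ker_eq_bot.mp (Submodule.ker_liftQ_eq_bot _ _ _ le_rfl)) ((ker φ).liftQ ψ h)
  exact ⟨F, by rw [← Submodule.liftQ_mkQ _ ψ h, ← hF, comp_assoc, Submodule.liftQ_mkQ]⟩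

theorem Finset.sum_smul_eq_zero_of_sum_fiber_eq_zero {ι β R M : Type*} [DecidableEq β]
    [Semiring R] [AddCommMonoid M] [Module R M] (s : Finset ι) (g : ι → R) (k : ι → β)
    (v : ι → M) (hv : ∀ i ∈ s, ∀ j ∈ s, k i = k j → v i = v j)
    (hg : ∀ b, ∑ i ∈ s with k i = b, g i = 0) :
    ∑ i ∈ s, g i • v i = 0 := by
  rw [← Finset.sum_fiberwise_of_maps_to (fun i hi => Finset.mem_image_of_mem k hi)]
  refine Finset.sum_eq_zero fun b hb => ?_
  obtain ⟨j, hj, rfl⟩ := Finset.mem_image.mp hb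
  calc ∑ i ∈ s with k i = k j, g i • v i
      = ∑ i ∈ s with k i = k j, g i • v j :=
        Finset.sum_congr rfl fun i hi => by
          rw [Finset.mem_filter] at hi
          rw [hv i hi.1 j hj hi.2]
    _ = 0 := by rw [← Finset.sum_smul, hg, zero_smul]

theorem sum_fiber_eq_zero_of_sum_zsmul_inducedHom_eq_zero {ι X Y : Type*} [DecidableEq Y]
    (s : Finset ι) (g : ι → ℤ) (u : ι → X → Y) (h : ∑ i ∈ s, g i • inducedHom (u i) = 0)
    (x : X) (y : Y) : ∑ i ∈ s with u i x = y, g i = 0 := by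
  have := congr_arg (fun w => FreeAbelianGroup.coeff y (w (FreeAbelianGroup.of x))) h
  simpa [inducedHom, Finset.sum_filter, FreeAbelianGroup.coeff, Finsupp.single_apply] using this

theorem IsUnitary.nonempty {X Y : Type*} [TopologicalSpace X] [TopologicalSpace Y]
    (hXY : IsUnitary X Y) : Nonempty X := by
  by_contra hX
  obtain ⟨E, hE, -⟩ := hXY ∅ fun x => (hX ⟨x⟩).elim
  exact Finset.notMem_empty E hE

theorem IsUnitary.exists_point_homotopic_of_eq {X Y : Type*} [TopologicalSpace X]
    [TopologicalSpace Y] (hXY : IsUnitary X Y) (s : Finset C(X, Y)) :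
    ∃ x₀ : X, ∀ a ∈ s, ∀ b ∈ s, a x₀ = b x₀ → a.Homotopic b := by
  classical
  let E : (s → s → Prop) → Set X := fun R => {x | ∀ a b : s, a.1 x = b.1 x ↔ R a b}
  obtain ⟨_, hRs, hrep⟩ := hXY (Finset.univ.image E) fun x =>
    ⟨E fun a b => a.1 x = b.1 x, Finset.mem_image_of_mem E (Finset.mem_univ _), fun _ _ => Iff.rfl⟩
  obtain ⟨R, -, rfl⟩ := Finset.mem_image.mp hRs
  rcases (E R).eq_empty_or_nonempty with hE | ⟨x₀, hx₀⟩
  · obtain ⟨x₀⟩ := hXY.nonempty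
    exact ⟨x₀, fun a _ b _ _ => hrep a b (hE ▸ Set.eqOn_empty _ _)⟩
  · refine ⟨x₀, fun a ha b hb hab => hrep a b fun x hx => ?_⟩
    exact (hx ⟨a, ha⟩ ⟨b, hb⟩).mpr ((hx₀ ⟨a, ha⟩ ⟨b, hb⟩).mp hab)

theorem IsHomotopyInvariant.sum_zsmul_eq_zero {X Y M : Type*} [TopologicalSpace X]
    [TopologicalSpace Y] [AddCommGroup M] {f : C(X, Y) → M} (hf : IsHomotopyInvariant f)
    (hXY : IsUnitary X Y) (s : Finset C(X, Y)) (g : C(X, Y) → ℤ)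
    (h : ∑ a ∈ s, g a • inducedHom a = 0) : ∑ a ∈ s, g a • f a = 0 := by
  classical
  obtain ⟨x₀, hx₀⟩ := hXY.exists_point_homotopic_of_eq s
  exact s.sum_smul_eq_zero_of_sum_fiber_eq_zero g (fun a => a x₀) f
    (fun a ha b hb hab => hf a b (hx₀ a ha b hb hab))
    (sum_fiber_eq_zero_of_sum_zsmul_inducedHom_eq_zero s g (fun a => a) h x₀)

/-- **Lemma 14.1.** If `M` is divisible and `X` is `Y`-unitary, then every homotopy invariant
`f : [X,Y] → M` is straight. -/
theorem invariant_isStraight_of_unitary (X Y M : Type*) [TopologicalSpace X]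
    [TopologicalSpace Y] [AddCommGroup M]
    (hdiv : ∀ (m : M) (n : ℤ), n ≠ 0 → ∃ m' : M, n • m' = m)
    (hXY : IsUnitary X Y) (f : C(X, Y) → M) (hf : IsHomotopyInvariant f) :
    IsStraight f := by
  have : DivisibleBy M ℤ := divisibleByOfSMulRightSurj M ℤ fun hn m => hdiv m _ hn
  let φ := Finsupp.linearCombination ℤ fun a : C(X, Y) => inducedL a
  have hker : LinearMap.ker φ ≤ LinearMap.ker (Finsupp.linearCombination ℤ f) := by
    intro c hc
    have hrel : ∑ a ∈ c.support, c a • inducedHom a = 0 := by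
      simpa [φ, Finsupp.linearCombination_apply, Finsupp.sum, inducedL] using
        congr_arg Subtype.val (LinearMap.mem_ker.mp hc)
    simpa [Finsupp.linearCombination_apply, Finsupp.sum] using
      hf.sum_zsmul_eq_zero hXY c.support c hrel
  obtain ⟨F, hF⟩ := LinearMap.exists_comp_eq_of_ker_le (Module.Baer.of_divisible M) φ _ hker
  exact ⟨F.toAddMonoidHom, fun a => by simpa [φ] using (LinearMap.congr_fun hF (.single a 1)).symm⟩
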